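/- arXiv:2306.14892 — 6 statements merged into one kernel-verified Lean document; each statement's English description precedes it below -/
import Mathlib

section
/- (Compliance lemma; Lemma 1 of the paper.) Let g be a compliant dataset-generation rule and let D = (s_i, a_i, s'_i, r_i)_{i=1}^n be an in-context dataset satisfying ∏_{i=1}^n g(s_i, a_i | D_{i−1}) > 0 and Σ_{τ'} λ(τ') L_{τ'}(D) > 0. Then for every task τ ∈ T, the posterior over tasks induced by the compliant dataset likelihood equals the posterior-sampling posterior: λ(τ) D^g(D; τ) / (Σ_{τ'} λ(τ') D^g(D; τ')) = w(τ | D). -/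
open scoped BigOperators

/-- An in-context dataset entry `(s, a, s', r)`. -/
abbrev Entry (S A Rw : Type*) := S × A × S × Rw

variable {T S A Rw : Type*}

/-- Environment likelihood `L_τ(D) = ∏ᵢ P_τ(s'ᵢ | sᵢ, aᵢ) · R_τ(rᵢ | sᵢ, aᵢ)`. -/
noncomputable def envLik (Pk : T → S → A → PMF S) (Rk : T → S → A → PMF Rw)
    (τ : T) (D : List (Entry S A Rw)) : ℝ :=
  (D.map fun e => (Pk τ e.1 e.2.1 e.2.2.1).toReal * (Rk τ e.1 e.2.1 e.2.2.2).toReal).prod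

/-- Posterior-sampling posterior `w(τ | D) = λ(τ) L_τ(D) / Σ_{τ'} λ(τ') L_{τ'}(D)`
(with the convention `x / 0 = 0`, built into real division). -/
noncomputable def psPost [Fintype T] (Pk : T → S → A → PMF S) (Rk : T → S → A → PMF Rw)
    (prior : PMF T) (D : List (Entry S A Rw)) (τ : T) : ℝ :=
  (prior τ).toReal * envLik Pk Rk τ D /
    ∑ τ' : T, (prior τ').toReal * envLik Pk Rk τ' D

/-- Dataset likelihood induced by a compliant dataset-generation rule `g`
(a task-independent PMF over `(s, a)` for each dataset prefix):
`D^g(D; τ) = ∏ᵢ g(sᵢ, aᵢ | D_{i-1}) · P_τ(s'ᵢ | sᵢ, aᵢ) · R_τ(rᵢ | sᵢ, aᵢ)`. -/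
noncomputable def gLik (Pk : T → S → A → PMF S) (Rk : T → S → A → PMF Rw)
    (g : List (Entry S A Rw) → PMF (S × A)) (τ : T) (D : List (Entry S A Rw)) : ℝ :=
  ∏ i : Fin D.length,
    ((g (D.take i) ((D.get i).1, (D.get i).2.1)).toReal *
      ((Pk τ (D.get i).1 (D.get i).2.1 (D.get i).2.2.1).toReal *
        (Rk τ (D.get i).1 (D.get i).2.1 (D.get i).2.2.2).toReal))

lemma gLik_eq_prod_mul_envLik (Pk : T → S → A → PMF S) (Rk : T → S → A → PMF Rw)
    (g : List (Entry S A Rw) → PMF (S × A)) (τ : T) (D : List (Entry S A Rw)) :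
    gLik Pk Rk g τ D =
      (∏ i : Fin D.length, (g (D.take i) ((D.get i).1, (D.get i).2.1)).toReal) *
        envLik Pk Rk τ D := by
  rw [gLik, envLik, Finset.prod_mul_distrib, ← Fin.prod_univ_fun_getElem]
  rfl

lemma mul_div_sum_mul_left {ι K : Type*} [Field K] (s : Finset ι) (f : ι → K) {c : K}
    (hc : c ≠ 0) (i : ι) :
    c * f i / ∑ j ∈ s, c * f j = f i / ∑ j ∈ s, f j := by
  rw [← Finset.mul_sum, mul_div_mul_left _ _ hc]

theorem compliance_lemma_general
    [Fintype T]
    (Pk : T → S → A → PMF S) (Rk : T → S → A → PMF Rw) (prior : PMF T)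
    (g : List (Entry S A Rw) → PMF (S × A)) (D : List (Entry S A Rw))
    (hg : 0 < ∏ i : Fin D.length, (g (D.take i) ((D.get i).1, (D.get i).2.1)).toReal) :
    ∀ τ : T,
      (prior τ).toReal * gLik Pk Rk g τ D /
          (∑ τ' : T, (prior τ').toReal * gLik Pk Rk g τ' D) =
        psPost Pk Rk prior D τ := by
  intro τ
  simp_rw [gLik_eq_prod_mul_envLik, mul_left_comm (prior _).toReal]
  exact mul_div_sum_mul_left _ (fun τ' => (prior τ').toReal * envLik Pk Rk τ' D) hg.ne' τ

/-- **Compliance lemma (Lemma 1).** If the compliant factors of the dataset `D` are positive,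
`∏ᵢ g(sᵢ, aᵢ | D_{i-1}) > 0`, and `Σ_{τ'} λ(τ') L_{τ'}(D) > 0`, then for every task `τ` the
posterior over tasks induced by the compliant dataset likelihood coincides with the
posterior-sampling posterior:
`λ(τ) D^g(D; τ) / (Σ_{τ'} λ(τ') D^g(D; τ')) = w(τ | D)`. -/
theorem compliance_lemma
    [Fintype T] [Nonempty T] [Fintype S] [Nonempty S] [Fintype A] [Nonempty A]
    [Fintype Rw] [Nonempty Rw]
    (Pk : T → S → A → PMF S) (Rk : T → S → A → PMF Rw) (prior : PMF T)
    (g : List (Entry S A Rw) → PMF (S × A)) (D : List (Entry S A Rw))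
    (hg : 0 < ∏ i : Fin D.length, (g (D.take i) ((D.get i).1, (D.get i).2.1)).toReal)
    (hD : 0 < ∑ τ' : T, (prior τ').toReal * envLik Pk Rk τ' D) :
    ∀ τ : T,
      (prior τ).toReal * gLik Pk Rk g τ D /
          (∑ τ' : T, (prior τ').toReal * gLik Pk Rk g τ' D) =
        psPost Pk Rk prior D τ :=
  compliance_lemma_general Pk Rk prior g D hg
end

section
/- (Theorem 1: DPT is equivalent to posterior sampling.) Suppose Σ_{τ'} λ(τ') L_{τ'}(D) > 0 and that for every h ∈ {1,…,H} the length-(h−1) prefix ξ_{h−1} of the trajectory ξ_H satisfies Σ_τ w(τ | D) W_{h−1}(τ) > 0. Then P_ps(ξ_H | D, τ_c) = P_M(ξ_H | D, τ_c); that is, the distribution over length-H trajectories generated in test task τ_c by posterior sampling (sample τ ~ w(· | D), then execute π*_τ with transitions given by P_{τ_c}) coincides with the distribution generated by sampling each action from the DPT conditional M given the dataset D and the history so far. -/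
open scoped BigOperators

variable {T S A Rw : Type*}

/-- Prefix weight `W_h(τ) = ∏ᵢ π*_τ(aᵢ | sᵢ)` of a history `ξ_h` (equal to `1` if `h = 0`). -/
noncomputable def histW (πs : T → S → PMF A) (τ : T) (ξ : List (S × A)) : ℝ :=
  (ξ.map fun p => (πs τ p.1 p.2).toReal).prod

/-- DPT conditional action distribution
`M(a | s, D, ξ) = (Σ_τ w(τ|D) W(τ) π*_τ(a|s)) / (Σ_τ w(τ|D) W(τ))` (with `x / 0 = 0`). -/
noncomputable def dptM [Fintype T] (Pk : T → S → A → PMF S) (Rk : T → S → A → PMF Rw)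
    (πs : T → S → PMF A) (prior : PMF T)
    (D : List (Entry S A Rw)) (ξ : List (S × A)) (s : S) (a : A) : ℝ :=
  (∑ τ : T, psPost Pk Rk prior D τ * histW πs τ ξ * (πs τ s a).toReal) /
    (∑ τ : T, psPost Pk Rk prior D τ * histW πs τ ξ)

/-- Probability `ρ(s₁)` of the initial state of a trajectory (`1` for the empty trajectory). -/
noncomputable def initProb (ρ : PMF S) : List (S × A) → ℝ
  | [] => 1
  | p :: _ => (ρ p.1).toReal

/-- Product of test-task transition probabilities `∏_{h=1}^{H-1} P_{τc}(s_{h+1} | s_h, a_h)`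
along a trajectory. -/
noncomputable def transProd (Pk : T → S → A → PMF S) (τc : T) : List (S × A) → ℝ
  | [] => 1
  | [_] => 1
  | (s, a) :: p :: rest => (Pk τc s a p.1).toReal * transProd Pk τc (p :: rest)

/-- Trajectory probability under posterior sampling:
`P_ps(ξ_H | D, τc) = (Σ_τ w(τ|D) ∏_h π*_τ(a_h|s_h)) · ρ(s₁) · ∏_{h<H} P_{τc}(s_{h+1}|s_h,a_h)`. -/
noncomputable def trajPs [Fintype T] (Pk : T → S → A → PMF S) (Rk : T → S → A → PMF Rw)
    (πs : T → S → PMF A) (prior : PMF T) (τc : T) (ρ : PMF S)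
    (D : List (Entry S A Rw)) (ξ : List (S × A)) : ℝ :=
  (∑ τ : T, psPost Pk Rk prior D τ * histW πs τ ξ) * initProb ρ ξ * transProd Pk τc ξ

/-- Trajectory probability under the DPT rollout:
`P_M(ξ_H | D, τc) = ρ(s₁) · ∏_h M(a_h | s_h, D, ξ_{h-1}) · ∏_{h<H} P_{τc}(s_{h+1}|s_h,a_h)`. -/
noncomputable def trajM [Fintype T] (Pk : T → S → A → PMF S) (Rk : T → S → A → PMF Rw)
    (πs : T → S → PMF A) (prior : PMF T) (τc : T) (ρ : PMF S)
    (D : List (Entry S A Rw)) (ξ : List (S × A)) : ℝ :=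
  initProb ρ ξ *
    (∏ i : Fin ξ.length,
      dptM Pk Rk πs prior D (ξ.take i) (ξ.get i).1 (ξ.get i).2) *
    transProd Pk τc ξ

/-!
Under posterior sampling the action part of a trajectory has probability `m(ξ) = Σ_τ w(τ) W(τ, ξ)`,
the mixture over tasks of the product weights. The DPT conditional at step `h` is the posterior
predictive `m(ξ_h) / m(ξ_{h-1})`, so the product of the conditionals telescopes to
`m(ξ_H) / m(ξ_0)`, and `m(ξ_0) = Σ_τ w(τ) = 1`. Initial-state and transition factors are the same
on both sides.
-/

open Finset

lemma prod_range_div_mul_eq_of_ne_zero {K : Type*} [Field K] {g : ℕ → K} {n : ℕ}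
    (hg : ∀ i < n, g i ≠ 0) : (∏ i ∈ range n, g (i + 1) / g i) * g 0 = g n := by
  induction n with
  | zero => simp
  | succ n ih =>
    rw [prod_range_succ, mul_right_comm, ih fun i hi => hg i (by omega),
      mul_div_cancel₀ _ (hg n (by omega))]

lemma histW_take_succ (πs : T → S → PMF A) (τ : T) (ξ : List (S × A)) {i : ℕ}
    (hi : i < ξ.length) :
    histW πs τ (ξ.take (i + 1)) = histW πs τ (ξ.take i) * (πs τ ξ[i].1 ξ[i].2).toReal := by
  rw [histW, histW, List.take_succ_eq_append_getElem hi, List.map_append, List.prod_append,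
    List.map_singleton, List.prod_singleton]

lemma prod_predictive_mul_sum_eq_mixture [Fintype T] (w : T → ℝ) (πs : T → S → PMF A)
    (ξ : List (S × A))
    (hξ : ∀ k < ξ.length, ∑ τ, w τ * histW πs τ (ξ.take k) ≠ 0) :
    (∏ i : Fin ξ.length,
        (∑ τ, w τ * histW πs τ (ξ.take i) * (πs τ (ξ.get i).1 (ξ.get i).2).toReal) /
          ∑ τ, w τ * histW πs τ (ξ.take i)) * ∑ τ, w τ =
      ∑ τ, w τ * histW πs τ ξ := by
  set m : ℕ → ℝ := fun k => ∑ τ, w τ * histW πs τ (ξ.take k) with hm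
  have hpredictive : ∀ i : Fin ξ.length,
      (∑ τ, w τ * histW πs τ (ξ.take i) * (πs τ (ξ.get i).1 (ξ.get i).2).toReal) /
        ∑ τ, w τ * histW πs τ (ξ.take i) = m (i + 1) / m i := fun i => by
    simp only [hm, histW_take_succ πs _ ξ i.isLt, mul_assoc, List.get_eq_getElem]
  have hm0 : m 0 = ∑ τ, w τ := by simp [hm, histW]
  have hmξ : m ξ.length = ∑ τ, w τ * histW πs τ ξ := by simp [hm]
  rw [Fintype.prod_congr _ _ hpredictive, Fin.prod_univ_eq_prod_range (fun i => m (i + 1) / m i),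
    ← hm0, ← hmξ]
  exact prod_range_div_mul_eq_of_ne_zero hξ

lemma sum_psPost_eq_one [Fintype T] (Pk : T → S → A → PMF S) (Rk : T → S → A → PMF Rw)
    (prior : PMF T) (D : List (Entry S A Rw))
    (hD : 0 < ∑ τ : T, (prior τ).toReal * envLik Pk Rk τ D) :
    ∑ τ : T, psPost Pk Rk prior D τ = 1 := by
  rw [← div_self hD.ne', sum_div]
  simp only [psPost]

theorem dpt_equals_posterior_sampling_general
    [Fintype T]
    (Pk : T → S → A → PMF S) (Rk : T → S → A → PMF Rw) (πs : T → S → PMF A)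
    (prior : PMF T) (τc : T) (ρ : PMF S) (D : List (Entry S A Rw))
    (H : ℕ) (ξ : List (S × A)) (hξ : ξ.length = H)
    (hD : 0 < ∑ τ' : T, (prior τ').toReal * envLik Pk Rk τ' D)
    (hpre : ∀ h : ℕ, h < H →
      0 < ∑ τ : T, psPost Pk Rk prior D τ * histW πs τ (ξ.take h)) :
    trajPs Pk Rk πs prior τc ρ D ξ = trajM Pk Rk πs prior τc ρ D ξ := by
  have hchain := prod_predictive_mul_sum_eq_mixture (psPost Pk Rk prior D) πs ξ
    fun k hk => (hpre k (hξ ▸ hk)).ne'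
  rw [sum_psPost_eq_one Pk Rk prior D hD, mul_one] at hchain
  rw [trajPs, trajM, ← hchain]
  simp only [dptM]
  ring

/-- **Theorem 1 (DPT ⟺ posterior sampling).** If `Σ_{τ'} λ(τ') L_{τ'}(D) > 0` and for every
`h ∈ {1, …, H}` the length-`(h-1)` prefix `ξ_{h-1}` of `ξ_H` satisfies
`Σ_τ w(τ|D) W_{h-1}(τ) > 0`, then `P_ps(ξ_H | D, τ_c) = P_M(ξ_H | D, τ_c)`. -/
theorem dpt_equals_posterior_sampling
    [Fintype T] [Nonempty T] [Fintype S] [Nonempty S] [Fintype A] [Nonempty A]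
    [Fintype Rw] [Nonempty Rw]
    (Pk : T → S → A → PMF S) (Rk : T → S → A → PMF Rw) (πs : T → S → PMF A)
    (prior : PMF T) (τc : T) (ρ : PMF S) (D : List (Entry S A Rw))
    (H : ℕ) (hH : 1 ≤ H) (ξ : List (S × A)) (hξ : ξ.length = H)
    (hD : 0 < ∑ τ' : T, (prior τ').toReal * envLik Pk Rk τ' D)
    (hpre : ∀ h : ℕ, h < H →
      0 < ∑ τ : T, psPost Pk Rk prior D τ * histW πs τ (ξ.take h)) :
    trajPs Pk Rk πs prior τc ρ D ξ = trajM Pk Rk πs prior τc ρ D ξ :=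
  dpt_equals_posterior_sampling_general Pk Rk πs prior τc ρ D H ξ hξ hD hpre
end

section
/- (Proposition 2: invariance of DPT to compliant pretraining dataset distributions.) Let g¹ and g² be two compliant dataset-generation rules with identical support, i.e., for every dataset prefix D_{i−1} and every (s, a, s', r) the corresponding factors satisfy g¹(s, a | D_{i−1}) > 0 if and only if g²(s, a | D_{i−1}) > 0. Let P¹_pre and P²_pre denote the pretraining joint distributions built from the same prior λ, the same full-support D_query and 𝔖_h, and the same optimal policies π*, but with in-context dataset rules g¹ and g² respectively. Then for all a* ∈ A, s_query ∈ S, datasets D, and histories ξ_h such that the event (s_query, D, ξ_h) has positive probability under both joints, the conditional distributions of the optimal-action label agree: P¹_pre(a* | s_query, D, ξ_h) = P²_pre(a* | s_query, D, ξ_h). -/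
open scoped BigOperators ENNReal NNReal

variable {T S A Rw : Type*}

/-- Pretraining joint distribution
`P_pre(τ, a*, s_query, D, ξ_h) = λ(τ) · D^g(D;τ) · D_query(s_query) · 𝔖_h(s_{1:h})
  · π*_τ(a*|s_query) · ∏ᵢ π*_τ(aᵢ|sᵢ)`,
where `SSeq h` is the state-sequence distribution `𝔖_h` on sequences of length `h`. -/
noncomputable def preJoint [Fintype T] (Pk : T → S → A → PMF S) (Rk : T → S → A → PMF Rw)
    (πs : T → S → PMF A) (prior : PMF T)
    (g : List (Entry S A Rw) → PMF (S × A)) (Dq : PMF S) (SSeq : ℕ → List S → ℝ≥0∞)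
    (τ : T) (astar : A) (squery : S) (D : List (Entry S A Rw)) (ξ : List (S × A)) : ℝ :=
  (prior τ).toReal * gLik Pk Rk g τ D * (Dq squery).toReal *
    (SSeq ξ.length (ξ.map Prod.fst)).toReal * (πs τ squery astar).toReal * histW πs τ ξ

/-!
The dataset-generation rule `g` enters the pretraining joint only through the factor
`∏ᵢ g(sᵢ, aᵢ | D_{i-1})`, which depends neither on the task `τ` nor on the label `a*`.
It therefore cancels between numerator and denominator of `P_pre(a* | s_query, D, ξ_h)`;
it is nonzero because the conditioning event has positive probability. What remains is
the same for every rule.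
-/

noncomputable def ruleLik (g : List (Entry S A Rw) → PMF (S × A)) (D : List (Entry S A Rw)) :
    ℝ :=
  ∏ i : Fin D.length, (g (D.take i) ((D.get i).1, (D.get i).2.1)).toReal

noncomputable def envJoint (Pk : T → S → A → PMF S) (Rk : T → S → A → PMF Rw)
    (πs : T → S → PMF A) (prior : PMF T) (Dq : PMF S) (SSeq : ℕ → List S → ℝ≥0∞)
    (τ : T) (astar : A) (squery : S) (D : List (Entry S A Rw)) (ξ : List (S × A)) : ℝ :=
  (prior τ).toReal * envLik Pk Rk τ D * (Dq squery).toReal *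
    (SSeq ξ.length (ξ.map Prod.fst)).toReal * (πs τ squery astar).toReal * histW πs τ ξ

theorem gLik_eq_ruleLik_mul_envLik (Pk : T → S → A → PMF S) (Rk : T → S → A → PMF Rw)
    (g : List (Entry S A Rw) → PMF (S × A)) (τ : T) (D : List (Entry S A Rw)) :
    gLik Pk Rk g τ D = ruleLik g D * envLik Pk Rk τ D := by
  rw [gLik, ruleLik, envLik, Finset.prod_mul_distrib, ← Fin.prod_univ_fun_getElem]
  rfl

theorem preJoint_eq_ruleLik_mul_envJoint [Fintype T]
    (Pk : T → S → A → PMF S) (Rk : T → S → A → PMF Rw) (πs : T → S → PMF A) (prior : PMF T)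
    (g : List (Entry S A Rw) → PMF (S × A)) (Dq : PMF S) (SSeq : ℕ → List S → ℝ≥0∞)
    (τ : T) (astar : A) (squery : S) (D : List (Entry S A Rw)) (ξ : List (S × A)) :
    preJoint Pk Rk πs prior g Dq SSeq τ astar squery D ξ =
      ruleLik g D * envJoint Pk Rk πs prior Dq SSeq τ astar squery D ξ := by
  rw [preJoint, envJoint, gLik_eq_ruleLik_mul_envLik]
  ring

theorem sum_mul_div_sum_sum_mul_of_ne_zero {ι κ K : Type*} [Fintype ι] [Fintype κ] [Field K]
    (c : K) (F : ι → κ → K) (k : κ) (hne : ∑ i, ∑ j, c * F i j ≠ 0) :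
    (∑ i, c * F i k) / (∑ i, ∑ j, c * F i j) = (∑ i, F i k) / (∑ i, ∑ j, F i j) := by
  simp only [← Finset.mul_sum] at hne ⊢
  exact mul_div_mul_left _ _ (left_ne_zero_of_mul hne)

theorem preJoint_cond_eq_envJoint_cond [Fintype T] [Fintype A]
    (Pk : T → S → A → PMF S) (Rk : T → S → A → PMF Rw) (πs : T → S → PMF A) (prior : PMF T)
    (g : List (Entry S A Rw) → PMF (S × A)) (Dq : PMF S) (SSeq : ℕ → List S → ℝ≥0∞)
    (astar : A) (squery : S) (D : List (Entry S A Rw)) (ξ : List (S × A))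
    (hpos : 0 < ∑ τ : T, ∑ a : A, preJoint Pk Rk πs prior g Dq SSeq τ a squery D ξ) :
    (∑ τ : T, preJoint Pk Rk πs prior g Dq SSeq τ astar squery D ξ) /
        (∑ τ : T, ∑ a : A, preJoint Pk Rk πs prior g Dq SSeq τ a squery D ξ) =
      (∑ τ : T, envJoint Pk Rk πs prior Dq SSeq τ astar squery D ξ) /
        (∑ τ : T, ∑ a : A, envJoint Pk Rk πs prior Dq SSeq τ a squery D ξ) := by
  simp only [preJoint_eq_ruleLik_mul_envJoint] at hpos ⊢
  exact sum_mul_div_sum_sum_mul_of_ne_zero _ _ astar hpos.ne'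

theorem dpt_invariant_to_compliant_dataset_distribution_general
    [Fintype T] [Fintype A]
    (Pk : T → S → A → PMF S) (Rk : T → S → A → PMF Rw) (πs : T → S → PMF A)
    (prior : PMF T)
    (g1 g2 : List (Entry S A Rw) → PMF (S × A))
    (Dq : PMF S)
    (SSeq : ℕ → List S → ℝ≥0∞)
    (astar : A) (squery : S) (D : List (Entry S A Rw)) (ξ : List (S × A))
    (hpos1 : 0 < ∑ τ : T, ∑ a : A, preJoint Pk Rk πs prior g1 Dq SSeq τ a squery D ξ)
    (hpos2 : 0 < ∑ τ : T, ∑ a : A, preJoint Pk Rk πs prior g2 Dq SSeq τ a squery D ξ) :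
    (∑ τ : T, preJoint Pk Rk πs prior g1 Dq SSeq τ astar squery D ξ) /
        (∑ τ : T, ∑ a : A, preJoint Pk Rk πs prior g1 Dq SSeq τ a squery D ξ) =
      (∑ τ : T, preJoint Pk Rk πs prior g2 Dq SSeq τ astar squery D ξ) /
        (∑ τ : T, ∑ a : A, preJoint Pk Rk πs prior g2 Dq SSeq τ a squery D ξ) := by
  rw [preJoint_cond_eq_envJoint_cond (hpos := hpos1),
    preJoint_cond_eq_envJoint_cond (hpos := hpos2)]

/-- **Proposition 2 (invariance of DPT to compliant pretraining dataset distributions).**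
If `g¹` and `g²` are compliant dataset-generation rules with identical support, and the
pretraining joints `P¹_pre`, `P²_pre` are built from the same prior `λ`, the same full-support
`D_query` and `𝔖_h`, and the same optimal policies `π*`, then for every `a*`, `s_query`, `D`,
`ξ_h` such that the event `(s_query, D, ξ_h)` has positive probability under both joints,
`P¹_pre(a* | s_query, D, ξ_h) = P²_pre(a* | s_query, D, ξ_h)`. -/
theorem dpt_invariant_to_compliant_dataset_distribution
    [Fintype T] [Nonempty T] [Fintype S] [Nonempty S] [Fintype A] [Nonempty A]
    [Fintype Rw] [Nonempty Rw]
    (Pk : T → S → A → PMF S) (Rk : T → S → A → PMF Rw) (πs : T → S → PMF A)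
    (prior : PMF T)
    (g1 g2 : List (Entry S A Rw) → PMF (S × A))
    (hsupp : ∀ (D' : List (Entry S A Rw)) (s : S) (a : A),
      g1 D' (s, a) ≠ 0 ↔ g2 D' (s, a) ≠ 0)
    (Dq : PMF S) (hDq : ∀ s : S, Dq s ≠ 0)
    (SSeq : ℕ → List S → ℝ≥0∞)
    (hSpos : ∀ (h : ℕ) (l : List S), l.length = h → SSeq h l ≠ 0)
    (hSnorm : ∀ h : ℕ, ∑' l : {l : List S // l.length = h}, SSeq h l.val = 1)
    (astar : A) (squery : S) (D : List (Entry S A Rw)) (ξ : List (S × A))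
    (hpos1 : 0 < ∑ τ : T, ∑ a : A, preJoint Pk Rk πs prior g1 Dq SSeq τ a squery D ξ)
    (hpos2 : 0 < ∑ τ : T, ∑ a : A, preJoint Pk Rk πs prior g2 Dq SSeq τ a squery D ξ) :
    (∑ τ : T, preJoint Pk Rk πs prior g1 Dq SSeq τ astar squery D ξ) /
        (∑ τ : T, ∑ a : A, preJoint Pk Rk πs prior g1 Dq SSeq τ a squery D ξ) =
      (∑ τ : T, preJoint Pk Rk πs prior g2 Dq SSeq τ astar squery D ξ) /
        (∑ τ : T, ∑ a : A, preJoint Pk Rk πs prior g2 Dq SSeq τ a squery D ξ) :=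
  dpt_invariant_to_compliant_dataset_distribution_general Pk Rk πs prior g1 g2 Dq SSeq astar squery
    D ξ hpos1 hpos2
end

section
/- (Invariance of the task posterior; intermediate claim in the proof of Proposition 2.) Let g¹ and g² be two compliant dataset-generation rules with identical support, i.e., for every dataset prefix D_{i−1} and every (s, a), g¹(s, a | D_{i−1}) > 0 if and only if g²(s, a | D_{i−1}) > 0. Let P¹_pre and P²_pre denote the pretraining joint distributions built from the same prior λ, the same full-support D_query and 𝔖_h, and the same optimal policies π*, but with in-context dataset rules g¹ and g² respectively. Then for all τ ∈ T, s_query ∈ S, datasets D, and histories ξ_h such that the event (s_query, D, ξ_h) has positive probability under both joints, the conditional task posteriors agree: P¹_pre(τ | s_query, D, ξ_h) = P²_pre(τ | s_query, D, ξ_h). -/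
open scoped BigOperators ENNReal NNReal

variable {T S A Rw : Type*}

theorem sum_mul_left_div_sum_sum_mul_left {ι κ K : Type*} [Fintype ι] [Fintype κ] [Field K]
    (c : K) (f : ι → κ → K) (h : ∑ j, ∑ a, c * f j a ≠ 0) (i : ι) :
    (∑ a, c * f i a) / (∑ j, ∑ a, c * f j a) = (∑ a, f i a) / ∑ j, ∑ a, f j a := by
  simp only [← Finset.mul_sum] at h ⊢
  exact mul_div_mul_left _ _ (left_ne_zero_of_mul h)

theorem preJoint_taskPosterior_eq_envJoint_taskPosterior [Fintype T] [Fintype A]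
    (Pk : T → S → A → PMF S) (Rk : T → S → A → PMF Rw) (πs : T → S → PMF A) (prior : PMF T)
    (g : List (Entry S A Rw) → PMF (S × A)) (Dq : PMF S) (SSeq : ℕ → List S → ℝ≥0∞)
    (squery : S) (D : List (Entry S A Rw)) (ξ : List (S × A))
    (hpos : ∑ τ : T, ∑ a : A, preJoint Pk Rk πs prior g Dq SSeq τ a squery D ξ ≠ 0) (τ : T) :
    (∑ a : A, preJoint Pk Rk πs prior g Dq SSeq τ a squery D ξ) /
        (∑ τ' : T, ∑ a : A, preJoint Pk Rk πs prior g Dq SSeq τ' a squery D ξ) =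
      (∑ a : A, envJoint Pk Rk πs prior Dq SSeq τ a squery D ξ) /
        (∑ τ' : T, ∑ a : A, envJoint Pk Rk πs prior Dq SSeq τ' a squery D ξ) := by
  simp only [preJoint_eq_ruleLik_mul_envJoint] at hpos ⊢
  exact sum_mul_left_div_sum_sum_mul_left _ _ hpos τ

theorem task_posterior_invariant_to_compliant_dataset_distribution_general
    [Fintype T] [Fintype A]
    (Pk : T → S → A → PMF S) (Rk : T → S → A → PMF Rw) (πs : T → S → PMF A)
    (prior : PMF T)
    (g1 g2 : List (Entry S A Rw) → PMF (S × A))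
    (Dq : PMF S)
    (SSeq : ℕ → List S → ℝ≥0∞)
    (squery : S) (D : List (Entry S A Rw)) (ξ : List (S × A))
    (hpos1 : 0 < ∑ τ : T, ∑ a : A, preJoint Pk Rk πs prior g1 Dq SSeq τ a squery D ξ)
    (hpos2 : 0 < ∑ τ : T, ∑ a : A, preJoint Pk Rk πs prior g2 Dq SSeq τ a squery D ξ) :
    ∀ τ : T,
      (∑ a : A, preJoint Pk Rk πs prior g1 Dq SSeq τ a squery D ξ) /
          (∑ τ' : T, ∑ a : A, preJoint Pk Rk πs prior g1 Dq SSeq τ' a squery D ξ) =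
        (∑ a : A, preJoint Pk Rk πs prior g2 Dq SSeq τ a squery D ξ) /
          (∑ τ' : T, ∑ a : A, preJoint Pk Rk πs prior g2 Dq SSeq τ' a squery D ξ) := by
  intro τ
  rw [preJoint_taskPosterior_eq_envJoint_taskPosterior (hpos := hpos1.ne'),
    preJoint_taskPosterior_eq_envJoint_taskPosterior (hpos := hpos2.ne')]

/-- **Invariance of the task posterior** (intermediate claim in the proof of Proposition 2).
If `g¹` and `g²` are compliant dataset-generation rules with identical support, and the
pretraining joints `P¹_pre`, `P²_pre` are built from the same prior `λ`, the same full-support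
`D_query` and `𝔖_h`, and the same optimal policies `π*`, then for every `τ`, `s_query`, `D`,
`ξ_h` such that the event `(s_query, D, ξ_h)` has positive probability under both joints,
the conditional task posteriors agree:
`P¹_pre(τ | s_query, D, ξ_h) = P²_pre(τ | s_query, D, ξ_h)`. -/
theorem task_posterior_invariant_to_compliant_dataset_distribution
    [Fintype T] [Nonempty T] [Fintype S] [Nonempty S] [Fintype A] [Nonempty A]
    [Fintype Rw] [Nonempty Rw]
    (Pk : T → S → A → PMF S) (Rk : T → S → A → PMF Rw) (πs : T → S → PMF A)
    (prior : PMF T)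
    (g1 g2 : List (Entry S A Rw) → PMF (S × A))
    (hsupp : ∀ (D' : List (Entry S A Rw)) (s : S) (a : A),
      g1 D' (s, a) ≠ 0 ↔ g2 D' (s, a) ≠ 0)
    (Dq : PMF S) (hDq : ∀ s : S, Dq s ≠ 0)
    (SSeq : ℕ → List S → ℝ≥0∞)
    (hSpos : ∀ (h : ℕ) (l : List S), l.length = h → SSeq h l ≠ 0)
    (hSnorm : ∀ h : ℕ, ∑' l : {l : List S // l.length = h}, SSeq h l.val = 1)
    (squery : S) (D : List (Entry S A Rw)) (ξ : List (S × A))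
    (hpos1 : 0 < ∑ τ : T, ∑ a : A, preJoint Pk Rk πs prior g1 Dq SSeq τ a squery D ξ)
    (hpos2 : 0 < ∑ τ : T, ∑ a : A, preJoint Pk Rk πs prior g2 Dq SSeq τ a squery D ξ) :
    ∀ τ : T,
      (∑ a : A, preJoint Pk Rk πs prior g1 Dq SSeq τ a squery D ξ) /
          (∑ τ' : T, ∑ a : A, preJoint Pk Rk πs prior g1 Dq SSeq τ' a squery D ξ) =
        (∑ a : A, preJoint Pk Rk πs prior g2 Dq SSeq τ a squery D ξ) /
          (∑ τ' : T, ∑ a : A, preJoint Pk Rk πs prior g2 Dq SSeq τ' a squery D ξ) :=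
  task_posterior_invariant_to_compliant_dataset_distribution_general Pk Rk πs prior g1 g2 Dq SSeq
    squery D ξ hpos1 hpos2
end

section
/- (Single-episode value equivalence; consequence of Theorem 1 used in Corollary 1.) Define the mean reward r̄_{τ_c}(s, a) = Σ_{r ∈ R} r · R_{τ_c}(r | s, a) and, for a function Q on trajectories, the expected episode return V(Q) = Σ_{ξ_H ∈ (S×A)^H} Q(ξ_H) · Σ_{h=1}^H r̄_{τ_c}(s_h, a_h). Adopt the convention x/0 = 0 in the definitions of w and M, and assume Σ_{τ'} λ(τ') L_{τ'}(D) > 0. Then the expected return of one episode in the test task τ_c under the DPT rollout equals that under posterior sampling: V(P_M(· | D, τ_c)) = V(P_ps(· | D, τ_c)). -/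
open scoped BigOperators

variable {T S A Rw : Type*}

/-- Mean reward `r̄_{τc}(s, a) = Σ_{r ∈ R} r · R_{τc}(r | s, a)`, where `rval` gives the
real value of each element of the finite reward set. -/
noncomputable def meanReward (Rk : T → S → A → PMF Rw) (rval : Rw → ℝ)
    [Fintype Rw] (τc : T) (s : S) (a : A) : ℝ :=
  ∑ r : Rw, rval r * (Rk τc s a r).toReal

/-- Expected episode return `V(Q) = Σ_{ξ_H ∈ (S×A)^H} Q(ξ_H) · Σ_{h=1}^H r̄_{τc}(s_h, a_h)`
of a function `Q` on length-`H` trajectories. -/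
noncomputable def expReturn [Fintype S] [Fintype A] [Fintype Rw]
    (Rk : T → S → A → PMF Rw) (rval : Rw → ℝ) (τc : T) (H : ℕ)
    (Q : List (S × A) → ℝ) : ℝ :=
  ∑ v : List.Vector (S × A) H,
    Q v.toList * ((v.toList.map fun p => meanReward Rk rval τc p.1 p.2).sum)

/-! Dividing the mixture weight `Σ_τ w(τ|D) W(τ, ξ)` of a history by that of its one-step
prefix gives `M`, so the product of `M` along a trajectory telescopes to the mixture weight of
the whole trajectory, which is the policy factor of `P_ps`. The convention `x / 0 = 0` is
harmless because once a prefix has weight zero so do all its extensions. -/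

theorem Finset.prod_range_div₀ {G₀ : Type*} [CommGroupWithZero G₀] (f : ℕ → G₀) (n : ℕ)
    (h0 : f 0 ≠ 0) (hf : ∀ i < n, f i = 0 → f (i + 1) = 0) :
    ∏ i ∈ range n, f (i + 1) / f i = f n / f 0 := by
  induction n with
  | zero => simp [h0]
  | succ n ih =>
    rw [prod_range_succ, ih fun i hi => hf i (by omega)]
    by_cases hn : f n = 0
    · simp [hn, hf n (by omega) hn]
    · rw [mul_comm, div_mul_div_cancel₀ hn]

lemma envLik_nonneg (Pk : T → S → A → PMF S) (Rk : T → S → A → PMF Rw)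
    (τ : T) (D : List (Entry S A Rw)) : 0 ≤ envLik Pk Rk τ D :=
  List.prod_nonneg <| by simp only [List.mem_map]; rintro _ ⟨e, -, rfl⟩; positivity

lemma histW_nonneg (πs : T → S → PMF A) (τ : T) (ξ : List (S × A)) : 0 ≤ histW πs τ ξ :=
  List.prod_nonneg <| by simp only [List.mem_map]; rintro _ ⟨p, -, rfl⟩; positivity

lemma histW_append_singleton (πs : T → S → PMF A) (τ : T) (ξ : List (S × A)) (p : S × A) :
    histW πs τ (ξ ++ [p]) = histW πs τ ξ * (πs τ p.1 p.2).toReal := by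
  simp [histW]

section Posterior

variable [Fintype T] (Pk : T → S → A → PMF S) (Rk : T → S → A → PMF Rw)
  (πs : T → S → PMF A) (prior : PMF T) (D : List (Entry S A Rw))

lemma psPost_nonneg (τ : T) : 0 ≤ psPost Pk Rk prior D τ :=
  div_nonneg (mul_nonneg ENNReal.toReal_nonneg (envLik_nonneg ..))
    (Finset.sum_nonneg fun _ _ => mul_nonneg ENNReal.toReal_nonneg (envLik_nonneg ..))

variable {Pk Rk prior D} in
lemma sum_psPost (hD : 0 < ∑ τ' : T, (prior τ').toReal * envLik Pk Rk τ' D) :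
    ∑ τ, psPost Pk Rk prior D τ = 1 := by
  simp only [psPost, ← Finset.sum_div, div_self hD.ne']

noncomputable def psHistW (ξ : List (S × A)) : ℝ :=
  ∑ τ, psPost Pk Rk prior D τ * histW πs τ ξ

lemma psHistW_nonneg (ξ : List (S × A)) : 0 ≤ psHistW Pk Rk πs prior D ξ :=
  Finset.sum_nonneg fun _ _ => mul_nonneg (psPost_nonneg ..) (histW_nonneg ..)

variable {Pk Rk prior D} in
lemma psHistW_nil (hD : 0 < ∑ τ' : T, (prior τ').toReal * envLik Pk Rk τ' D) :
    psHistW Pk Rk πs prior D [] = 1 := by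
  simp [psHistW, histW, sum_psPost hD]

lemma psHistW_append_singleton_le (ξ : List (S × A)) (p : S × A) :
    psHistW Pk Rk πs prior D (ξ ++ [p]) ≤ psHistW Pk Rk πs prior D ξ := by
  refine Finset.sum_le_sum fun τ _ => ?_
  rw [histW_append_singleton, ← mul_assoc]
  refine mul_le_of_le_one_right (mul_nonneg (psPost_nonneg ..) (histW_nonneg ..)) ?_
  exact ENNReal.toReal_le_of_le_ofReal zero_le_one (by simpa using PMF.coe_le_one _ _)

lemma dptM_eq_psHistW_div (ξ : List (S × A)) (s : S) (a : A) :
    dptM Pk Rk πs prior D ξ s a =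
      psHistW Pk Rk πs prior D (ξ ++ [(s, a)]) / psHistW Pk Rk πs prior D ξ := by
  simp only [dptM, psHistW, histW_append_singleton, mul_assoc]

variable {Pk Rk prior D} in
lemma prod_dptM (hD : 0 < ∑ τ' : T, (prior τ').toReal * envLik Pk Rk τ' D)
    (ξ : List (S × A)) :
    ∏ i : Fin ξ.length, dptM Pk Rk πs prior D (ξ.take i) (ξ.get i).1 (ξ.get i).2 =
      psHistW Pk Rk πs prior D ξ := by
  set f : ℕ → ℝ := fun k => psHistW Pk Rk πs prior D (ξ.take k)
  have hstep : ∀ i (hi : i < ξ.length), ξ.take (i + 1) = ξ.take i ++ [ξ[i]] :=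
    fun i hi => List.take_succ_eq_append_getElem hi
  have hf0 : f 0 = 1 := psHistW_nil πs hD
  have hzero : ∀ i < ξ.length, f i = 0 → f (i + 1) = 0 := fun i hi hfi => by
    have hle := psHistW_append_singleton_le Pk Rk πs prior D (ξ.take i) ξ[i]
    rw [← hstep i hi] at hle
    exact le_antisymm (hle.trans hfi.le) (psHistW_nonneg ..)
  calc ∏ i : Fin ξ.length, dptM Pk Rk πs prior D (ξ.take i) (ξ.get i).1 (ξ.get i).2
      = ∏ i : Fin ξ.length, f (i + 1) / f i :=
        Finset.prod_congr rfl fun i _ => by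
          simp only [f, dptM_eq_psHistW_div, hstep i i.2, List.get_eq_getElem]
    _ = f ξ.length := by
        rw [Fin.prod_univ_eq_prod_range (fun i => f (i + 1) / f i),
          Finset.prod_range_div₀ f _ (hf0 ▸ one_ne_zero) hzero, hf0, div_one]
    _ = psHistW Pk Rk πs prior D ξ := by simp [f]

variable {Pk Rk prior D} in
theorem trajM_eq_trajPs (hD : 0 < ∑ τ' : T, (prior τ').toReal * envLik Pk Rk τ' D)
    (τc : T) (ρ : PMF S) :
    trajM Pk Rk πs prior τc ρ D = trajPs Pk Rk πs prior τc ρ D := by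
  funext ξ
  rw [trajM, trajPs, prod_dptM πs hD, psHistW]
  ring

end Posterior

theorem dpt_ps_value_equivalence_general
    [Fintype T] [Fintype S] [Fintype A]
    [Fintype Rw]
    (Pk : T → S → A → PMF S) (Rk : T → S → A → PMF Rw) (πs : T → S → PMF A)
    (prior : PMF T) (rval : Rw → ℝ) (τc : T) (ρ : PMF S)
    (D : List (Entry S A Rw)) (H : ℕ)
    (hD : 0 < ∑ τ' : T, (prior τ').toReal * envLik Pk Rk τ' D) :
    expReturn Rk rval τc H (trajM Pk Rk πs prior τc ρ D) =
      expReturn Rk rval τc H (trajPs Pk Rk πs prior τc ρ D) := by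
  rw [trajM_eq_trajPs πs hD]

/-- **Single-episode value equivalence** (consequence of Theorem 1, used in Corollary 1).
With the convention `x / 0 = 0` in the definitions of `w` and `M`, and assuming
`Σ_{τ'} λ(τ') L_{τ'}(D) > 0`, the expected return of one episode in the test task `τ_c`
under the DPT rollout equals that under posterior sampling:
`V(P_M(· | D, τ_c)) = V(P_ps(· | D, τ_c))`. -/
theorem dpt_ps_value_equivalence
    [Fintype T] [Nonempty T] [Fintype S] [Nonempty S] [Fintype A] [Nonempty A]
    [Fintype Rw] [Nonempty Rw]
    (Pk : T → S → A → PMF S) (Rk : T → S → A → PMF Rw) (πs : T → S → PMF A)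
    (prior : PMF T) (rval : Rw → ℝ) (τc : T) (ρ : PMF S)
    (D : List (Entry S A Rw)) (H : ℕ)
    (hD : 0 < ∑ τ' : T, (prior τ').toReal * envLik Pk Rk τ' D) :
    expReturn Rk rval τc H (trajM Pk Rk πs prior τc ρ D) =
      expReturn Rk rval τc H (trajPs Pk Rk πs prior τc ρ D) :=
  dpt_ps_value_equivalence_general Pk Rk πs prior rval τc ρ D H hD
end

section
/- (Proposition 1: maximum-likelihood concentration; Theorem 21 of Agarwal et al., stated in the paper.) For every δ ∈ (0, 1), with probability at least 1 − δ over the draw of the N i.i.d. samples (x_1, y_1), …, (x_N, y_N), every maximum-likelihood estimate f̂ ∈ F (i.e., every maximizer over f ∈ F of Σ_{i=1}^N log f(x_i)(y_i)) satisfies E_{x ~ p_X}[ (Σ_{y ∈ Y} |f̂(x)(y) − f*(x)(y)|)² ] ≤ 8 log(|F| / δ) / N. -/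
open MeasureTheory ProbabilityTheory
open scoped BigOperators ENNReal

/-!
If `f ∈ F` is at least as likely as `f*` on the sample, then, since `f*` is almost surely positive
at the sample points, `∏ᵢ √(f / f*)(xᵢ, yᵢ) ≥ 1`. By Markov's inequality and independence this
has probability at most `β^N`, where `β` is the `p_X`-average of the Bhattacharyya coefficient
`Σ_y √(f*(x)(y) f(x)(y))`. Cauchy–Schwarz gives
`(Σ_y |f − f*|)² ≤ (Σ_y (√f + √f*)²) (Σ_y (√f − √f*)²) ≤ 8 (1 − BC)`, so if the expected squared
total variation of `f` exceeds `8 log(|F|/δ)/N`, then `β ≤ 1 − log(|F|/δ)/N` and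
`β^N ≤ exp(−log(|F|/δ)) = δ/|F|`. Every maximum-likelihood estimate beats `f*`, so a union bound
over `F` finishes the proof.
-/

lemma lintegral_pi_prod_eq_pow {ι α : Type*} [Fintype ι] [MeasurableSpace α] (μ : Measure α)
    [IsProbabilityMeasure μ] {g : α → ℝ≥0∞} (hg : Measurable g) :
    ∫⁻ d : ι → α, ∏ i, g (d i) ∂(Measure.pi fun _ => μ) = (∫⁻ a, g a ∂μ) ^ Fintype.card ι := by
  rw [lintegral_prod_eq_prod_lintegral_of_indepFun _ _ (iIndepFun_pi fun _ => hg.aemeasurable)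
    fun i => hg.comp (measurable_pi_apply i)]
  simp_rw [(measurePreserving_eval (fun _ => μ) _).lintegral_comp hg]
  simp

lemma ENNReal.one_le_prod_rpow_div_of_prod_le {ι : Type*} {s : Finset ι} {p q : ι → ℝ≥0∞}
    (hp0 : ∀ i ∈ s, p i ≠ 0) (hp : ∀ i ∈ s, p i ≠ ∞) (h : ∏ i ∈ s, p i ≤ ∏ i ∈ s, q i) :
    1 ≤ ∏ i ∈ s, (q i / p i) ^ (1 / 2 : ℝ) := by
  rw [ENNReal.prod_rpow_of_nonneg (by norm_num), ENNReal.prod_div_distrib_of_ne_top hp]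
  refine ENNReal.one_le_rpow ?_ (by norm_num)
  rwa [ENNReal.le_div_iff_mul_le (Or.inl (Finset.prod_ne_zero_iff.2 hp0))
    (Or.inl (ENNReal.prod_ne_top hp)), one_mul]

lemma ENNReal.div_rpow_half_mul_eq_ofReal_sqrt_mul {a b : ℝ≥0∞} (ha : a ≠ ∞) (hb : b ≠ ∞) :
    (b / a) ^ (1 / 2 : ℝ) * a = ENNReal.ofReal (√a.toReal * √b.toReal) := by
  lift a to NNReal using ha
  lift b to NNReal using hb
  rcases eq_or_ne a 0 with rfl | ha0
  · simp
  rw [← ENNReal.coe_div ha0, ← ENNReal.coe_rpow_of_nonneg _ (by norm_num), ← ENNReal.coe_mul,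
    ← ENNReal.ofReal_coe_nnreal]
  congr 1
  have ha : (0 : ℝ) < a := by positivity
  simp only [ENNReal.coe_toReal, NNReal.coe_mul, NNReal.coe_rpow, NNReal.coe_div,
    ← Real.sqrt_eq_rpow, Real.sqrt_div' _ ha.le]
  field_simp
  rw [Real.sq_sqrt ha.le]

lemma sq_sum_abs_sub_le_eight_mul_one_sub_sum_sqrt_mul {ι : Type*} [Fintype ι] {p q : ι → ℝ}
    (hp0 : ∀ i, 0 ≤ p i) (hq0 : ∀ i, 0 ≤ q i) (hp : ∑ i, p i = 1) (hq : ∑ i, q i = 1) :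
    (∑ i, |q i - p i|) ^ 2 ≤ 8 * (1 - ∑ i, √(p i) * √(q i)) := by
  set β := ∑ i, √(p i) * √(q i)
  have hsq_sub : ∑ i, (√(p i) - √(q i)) ^ 2 = 2 - 2 * β := by
    simp only [sub_sq, Finset.sum_add_distrib, Finset.sum_sub_distrib, Real.sq_sqrt (hp0 _),
      Real.sq_sqrt (hq0 _), hp, hq, β, Finset.mul_sum, mul_assoc]
    ring
  have hsq_add : ∑ i, (√(p i) + √(q i)) ^ 2 = 2 + 2 * β := by
    simp only [add_sq, Finset.sum_add_distrib, Real.sq_sqrt (hp0 _),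
      Real.sq_sqrt (hq0 _), hp, hq, β, Finset.mul_sum, mul_assoc]
    ring
  have hfactor : ∀ i, |q i - p i| = (√(p i) + √(q i)) * |√(p i) - √(q i)| := fun i => by
    have h := mul_self_sub_mul_self (√(p i)) (√(q i))
    rw [Real.mul_self_sqrt (hp0 i), Real.mul_self_sqrt (hq0 i)] at h
    rw [abs_sub_comm, h, abs_mul, abs_of_nonneg (by positivity)]
  calc (∑ i, |q i - p i|) ^ 2
      ≤ (∑ i, (√(p i) + √(q i)) ^ 2) * ∑ i, |√(p i) - √(q i)| ^ 2 := by
        simp only [hfactor]; exact Finset.sum_mul_sq_le_sq_mul_sq _ _ _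
    _ = (2 + 2 * β) * (2 - 2 * β) := by simp only [sq_abs, hsq_sub, hsq_add]
    _ ≤ 8 * (1 - β) := by nlinarith [sq_nonneg (β - 1)]

lemma measure_pi_prod_le_prod_le_lintegral_pow {ι Z : Type*} [Fintype ι] [MeasurableSpace Z]
    (ν : Measure Z) [IsProbabilityMeasure ν] {p q : Z → ℝ≥0∞} (hp : Measurable p)
    (hq : Measurable q) (hp0 : ∀ᵐ z ∂ν, p z ≠ 0) (hp_top : ∀ z, p z ≠ ∞) :
    (Measure.pi fun _ : ι => ν) {d | ∏ i, p (d i) ≤ ∏ i, q (d i)} ≤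
      (∫⁻ z, (q z / p z) ^ (1 / 2 : ℝ) ∂ν) ^ Fintype.card ι := by
  have hg : Measurable fun z => (q z / p z) ^ (1 / 2 : ℝ) := (hq.div hp).pow_const _
  have hae : ∀ᵐ d ∂(Measure.pi fun _ : ι => ν), ∀ i, p (d i) ≠ 0 :=
    ae_all_iff.2 fun i => (measurePreserving_eval (fun _ : ι => ν) i).quasiMeasurePreserving.ae
      (p := fun z => p z ≠ 0) hp0
  calc _ ≤ (Measure.pi fun _ : ι => ν) {d | 1 ≤ ∏ i, (q (d i) / p (d i)) ^ (1 / 2 : ℝ)} :=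
        measure_mono_ae <| hae.mono fun d hd h =>
          ENNReal.one_le_prod_rpow_div_of_prod_le (fun i _ => hd i) (fun i _ => hp_top _) h
    _ ≤ ∫⁻ d, ∏ i, (q (d i) / p (d i)) ^ (1 / 2 : ℝ) ∂(Measure.pi fun _ : ι => ν) := by
        simpa using meas_ge_le_lintegral_div
          (Finset.measurable_prod _ fun i _ => hg.comp (measurable_pi_apply i)).aemeasurable
          one_ne_zero ENNReal.one_ne_top
    _ = _ := lintegral_pi_prod_eq_pow ν hg

lemma pow_le_inv_of_le_one_sub_log_div {a K : ℝ} {N : ℕ} (ha : 0 ≤ a) (hK : 0 < K) (hN : 0 < N)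
    (h : a ≤ 1 - Real.log K / N) : a ^ N ≤ K⁻¹ :=
  calc a ^ N ≤ Real.exp (-(Real.log K / N)) ^ N :=
        pow_le_pow_left₀ ha (h.trans (Real.one_sub_le_exp_neg _)) N
    _ = K⁻¹ := by
        rw [← Real.exp_nat_mul, mul_neg, mul_div_cancel₀ _ (by positivity), Real.exp_neg,
          Real.exp_log hK]

lemma ofReal_one_sub_le_measure_of_measure_compl_le {α : Type*} [MeasurableSpace α]
    {μ : Measure α} [IsProbabilityMeasure μ] {s : Set α} {δ : ℝ} (hδ : 0 ≤ δ)
    (h : μ sᶜ ≤ ENNReal.ofReal δ) : ENNReal.ofReal (1 - δ) ≤ μ s := by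
  have hs := measure_univ_le_add_compl s (μ := μ)
  rw [measure_univ] at hs
  rw [ENNReal.ofReal_sub _ hδ, ENNReal.ofReal_one]
  exact tsub_le_iff_right.2 (hs.trans (add_le_add_right h _))

namespace PMF

variable {Y : Type*} [Fintype Y]

noncomputable def bhattacharyya (p q : PMF Y) : ℝ := ∑ y, √(p y).toReal * √(q y).toReal

lemma sum_toReal (p : PMF Y) : ∑ y, (p y).toReal = 1 := by
  rw [← ENNReal.toReal_sum fun y _ => p.apply_ne_top y, ← tsum_fintype (L := .unconditional _),
    p.tsum_coe, ENNReal.toReal_one]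

lemma sq_sum_abs_sub_le_eight_mul_one_sub_bhattacharyya (p q : PMF Y) :
    (∑ y, |(q y).toReal - (p y).toReal|) ^ 2 ≤ 8 * (1 - p.bhattacharyya q) :=
  sq_sum_abs_sub_le_eight_mul_one_sub_sum_sqrt_mul (fun _ => ENNReal.toReal_nonneg)
    (fun _ => ENNReal.toReal_nonneg) p.sum_toReal q.sum_toReal

lemma bhattacharyya_nonneg (p q : PMF Y) : 0 ≤ p.bhattacharyya q :=
  Finset.sum_nonneg fun _ _ => by positivity

lemma bhattacharyya_le_one (p q : PMF Y) : p.bhattacharyya q ≤ 1 := by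
  linarith [sq_sum_abs_sub_le_eight_mul_one_sub_bhattacharyya p q,
    sq_nonneg (∑ y, |(q y).toReal - (p y).toReal|)]

lemma measurable_bhattacharyya {X : Type*} [MeasurableSpace X] {p q : X → PMF Y}
    (hp : ∀ y, Measurable fun x => p x y) (hq : ∀ y, Measurable fun x => q x y) :
    Measurable fun x => (p x).bhattacharyya (q x) :=
  Finset.measurable_sum _ fun y _ =>
    ((hp y).ennreal_toReal.sqrt).mul (hq y).ennreal_toReal.sqrt

variable [MeasurableSpace Y] [MeasurableSingletonClass Y]

lemma lintegral_div_rpow_half_toMeasure (p q : PMF Y) :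
    ∫⁻ y, (q y / p y) ^ (1 / 2 : ℝ) ∂p.toMeasure = ENNReal.ofReal (p.bhattacharyya q) := by
  rw [lintegral_fintype, bhattacharyya, ENNReal.ofReal_sum_of_nonneg fun _ _ => by positivity]
  refine Finset.sum_congr rfl fun y _ => ?_
  rw [p.toMeasure_apply_singleton y (measurableSet_singleton y),
    ENNReal.div_rpow_half_mul_eq_ofReal_sqrt_mul (p.apply_ne_top y) (q.apply_ne_top y)]

lemma ae_toMeasure_ne_zero (p : PMF Y) : ∀ᵐ y ∂p.toMeasure, p y ≠ 0 := by
  rw [ae_iff, p.toMeasure_apply_eq_zero_iff (Set.toFinite _).measurableSet]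
  exact Set.disjoint_left.2 fun y hy hy0 => hy0 (by simpa using hy)

end PMF

section ConditionalPMF

variable {X Y : Type*} [MeasurableSpace X] [Fintype Y]

lemma integrable_bhattacharyya (pX : Measure X) [IsFiniteMeasure pX] {p q : X → PMF Y}
    (hp : ∀ y, Measurable fun x => p x y) (hq : ∀ y, Measurable fun x => q x y) :
    Integrable (fun x => (p x).bhattacharyya (q x)) pX := by
  refine Integrable.of_bound (PMF.measurable_bhattacharyya hp hq).aestronglyMeasurable 1
    (ae_of_all _ fun x => ?_)
  rw [Real.norm_of_nonneg (PMF.bhattacharyya_nonneg _ _)]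
  exact PMF.bhattacharyya_le_one _ _

lemma integral_sq_sum_abs_sub_le_eight_mul_one_sub_integral_bhattacharyya (pX : Measure X)
    [IsProbabilityMeasure pX] {p q : X → PMF Y}
    (hp : ∀ y, Measurable fun x => p x y) (hq : ∀ y, Measurable fun x => q x y) :
    ∫ x, (∑ y, |(q x y).toReal - (p x y).toReal|) ^ 2 ∂pX ≤
      8 * (1 - ∫ x, (p x).bhattacharyya (q x) ∂pX) := by
  have hβ := integrable_bhattacharyya pX hp hq
  calc _ ≤ ∫ x, 8 * (1 - (p x).bhattacharyya (q x)) ∂pX :=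
        integral_mono_of_nonneg (ae_of_all _ fun _ => sq_nonneg _)
          (((integrable_const 1).sub hβ).const_mul 8)
          (ae_of_all _ fun x => PMF.sq_sum_abs_sub_le_eight_mul_one_sub_bhattacharyya _ _)
    _ = _ := by
        rw [integral_const_mul, integral_sub (integrable_const 1) hβ, integral_const,
          probReal_univ, one_smul]

variable [MeasurableSpace Y] [MeasurableSingletonClass Y]

lemma measurable_uncurry_pmf {p : X → PMF Y} (hp : ∀ y, Measurable fun x => p x y) :
    Measurable fun z : X × Y => p z.1 z.2 :=
  measurable_from_prod_countable_left hp

lemma ae_compProd_ne_zero (pX : Measure X) {p : X → PMF Y} (hp : ∀ y, Measurable fun x => p x y)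
    {κ : Kernel X Y} (hκ : ∀ x, κ x = (p x).toMeasure) :
    ∀ᵐ z ∂(pX ⊗ₘ κ), p z.1 z.2 ≠ 0 :=
  Measure.ae_compProd_of_ae_ae ((measurable_uncurry_pmf hp) (measurableSet_singleton 0)).compl
    (ae_of_all _ fun x => hκ x ▸ (p x).ae_toMeasure_ne_zero)

lemma lintegral_compProd_div_rpow_half (pX : Measure X) [IsFiniteMeasure pX] {p q : X → PMF Y}
    (hp : ∀ y, Measurable fun x => p x y) (hq : ∀ y, Measurable fun x => q x y)
    {κ : Kernel X Y} [IsSFiniteKernel κ] (hκ : ∀ x, κ x = (p x).toMeasure) :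
    ∫⁻ z, (q z.1 z.2 / p z.1 z.2) ^ (1 / 2 : ℝ) ∂(pX ⊗ₘ κ) =
      ENNReal.ofReal (∫ x, (p x).bhattacharyya (q x) ∂pX) := by
  have hm : Measurable fun z : X × Y => (q z.1 z.2 / p z.1 z.2) ^ (1 / 2 : ℝ) :=
    ((measurable_uncurry_pmf hq).div (measurable_uncurry_pmf hp)).pow_const _
  rw [Measure.lintegral_compProd hm]
  simp_rw [hκ, PMF.lintegral_div_rpow_half_toMeasure]
  exact (ofReal_integral_eq_lintegral_ofReal (integrable_bhattacharyya pX hp hq)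
    (ae_of_all _ fun x => PMF.bhattacharyya_nonneg _ _)).symm

lemma measure_pi_prod_le_prod_le_ofReal_integral_bhattacharyya_pow {ι : Type*} [Fintype ι]
    (pX : Measure X) [IsProbabilityMeasure pX] {p q : X → PMF Y}
    (hp : ∀ y, Measurable fun x => p x y) (hq : ∀ y, Measurable fun x => q x y)
    {κ : Kernel X Y} [IsMarkovKernel κ] (hκ : ∀ x, κ x = (p x).toMeasure) :
    (Measure.pi fun _ : ι => pX ⊗ₘ κ) {d | ∏ i, p (d i).1 (d i).2 ≤ ∏ i, q (d i).1 (d i).2} ≤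
      ENNReal.ofReal (∫ x, (p x).bhattacharyya (q x) ∂pX) ^ Fintype.card ι := by
  rw [← lintegral_compProd_div_rpow_half pX hp hq hκ]
  exact measure_pi_prod_le_prod_le_lintegral_pow _ (measurable_uncurry_pmf hp)
    (measurable_uncurry_pmf hq) (ae_compProd_ne_zero pX hp hκ) fun _ => PMF.apply_ne_top _ _

lemma measure_pi_prod_le_prod_le_inv_of_lt_integral_sq {ι : Type*} [Fintype ι] [Nonempty ι]
    (pX : Measure X) [IsProbabilityMeasure pX] {p q : X → PMF Y}
    (hp : ∀ y, Measurable fun x => p x y) (hq : ∀ y, Measurable fun x => q x y)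
    {κ : Kernel X Y} [IsMarkovKernel κ] (hκ : ∀ x, κ x = (p x).toMeasure) {K : ℝ} (hK : 0 < K)
    (h : 8 * Real.log K / Fintype.card ι <
      ∫ x, (∑ y, |(q x y).toReal - (p x y).toReal|) ^ 2 ∂pX) :
    (Measure.pi fun _ : ι => pX ⊗ₘ κ) {d | ∏ i, p (d i).1 (d i).2 ≤ ∏ i, q (d i).1 (d i).2} ≤
      ENNReal.ofReal K⁻¹ := by
  have hβ0 : 0 ≤ ∫ x, (p x).bhattacharyya (q x) ∂pX :=
    integral_nonneg fun _ => PMF.bhattacharyya_nonneg _ _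
  have hβ : ∫ x, (p x).bhattacharyya (q x) ∂pX ≤ 1 - Real.log K / Fintype.card ι := by
    rw [mul_div_assoc] at h
    linarith [integral_sq_sum_abs_sub_le_eight_mul_one_sub_integral_bhattacharyya pX hp hq]
  calc _ ≤ ENNReal.ofReal (∫ x, (p x).bhattacharyya (q x) ∂pX) ^ Fintype.card ι :=
        measure_pi_prod_le_prod_le_ofReal_integral_bhattacharyya_pow pX hp hq hκ
    _ ≤ ENNReal.ofReal K⁻¹ := by
        rw [← ENNReal.ofReal_pow hβ0]
        exact ENNReal.ofReal_le_ofReal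
          (pow_le_inv_of_le_one_sub_log_div hβ0 hK Fintype.card_pos hβ)

end ConditionalPMF

theorem mle_concentration_general
    {X : Type*} [MeasurableSpace X] {Y : Type*} [Fintype Y]
    [MeasurableSpace Y] [MeasurableSingletonClass Y]
    (pX : Measure X) [IsProbabilityMeasure pX]
    (F : Finset (X → PMF Y))
    (hmeas : ∀ f ∈ F, ∀ y : Y, Measurable fun x => f x y)
    (fstar : X → PMF Y) (hfstar : fstar ∈ F)
    (κ : Kernel X Y) [IsMarkovKernel κ] (hκ : ∀ x : X, κ x = (fstar x).toMeasure)
    (N : ℕ) (hN : 1 ≤ N) (δ : ℝ) (hδ : δ ∈ Set.Ioo (0 : ℝ) 1) :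
    ENNReal.ofReal (1 - δ) ≤
      (Measure.pi fun _ : Fin N => pX.compProd κ)
        {d : Fin N → X × Y |
          ∀ fhat ∈ F,
            (∀ f ∈ F, ∏ i : Fin N, f (d i).1 (d i).2 ≤ ∏ i : Fin N, fhat (d i).1 (d i).2) →
            ∫ x, (∑ y : Y, |(fhat x y).toReal - (fstar x y).toReal|) ^ 2 ∂pX ≤
              8 * Real.log (F.card / δ) / N} := by
  have : Nonempty (Fin N) := ⟨⟨0, hN⟩⟩
  have hcard : (0 : ℝ) < F.card := by exact_mod_cast Finset.card_pos.2 ⟨fstar, hfstar⟩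
  have hK : 0 < F.card / δ := div_pos hcard hδ.1
  set μ := Measure.pi fun _ : Fin N => pX.compProd κ
  let bad := {f ∈ F | 8 * Real.log (F.card / δ) / N <
    ∫ x, (∑ y : Y, |(f x y).toReal - (fstar x y).toReal|) ^ 2 ∂pX}
  refine ofReal_one_sub_le_measure_of_measure_compl_le hδ.1.le ?_
  calc μ _ ≤ μ (⋃ f ∈ bad, {d | ∏ i, fstar (d i).1 (d i).2 ≤ ∏ i, f (d i).1 (d i).2}) :=
        measure_mono fun d hd => by
          simp only [Set.mem_compl_iff, Set.mem_ofPred_eq, not_forall, not_le] at hd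
          obtain ⟨f, hf, hmle, hlt⟩ := hd
          exact Set.mem_biUnion (Finset.mem_filter.2 ⟨hf, hlt⟩) (hmle fstar hfstar)
    _ ≤ ∑ f ∈ bad, μ {d | ∏ i, fstar (d i).1 (d i).2 ≤ ∏ i, f (d i).1 (d i).2} :=
        measure_biUnion_finset_le _ _
    _ ≤ ∑ f ∈ bad, ENNReal.ofReal (F.card / δ)⁻¹ := Finset.sum_le_sum fun f hf => by
        obtain ⟨hfF, hlt⟩ := Finset.mem_filter.1 hf
        exact measure_pi_prod_le_prod_le_inv_of_lt_integral_sq pX (hmeas fstar hfstar)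
          (hmeas f hfF) hκ hK (by simpa using hlt)
    _ ≤ F.card * ENNReal.ofReal (F.card / δ)⁻¹ := by
        rw [Finset.sum_const, nsmul_eq_mul]
        gcongr
        exact Finset.filter_subset _ F
    _ = ENNReal.ofReal δ := by
        rw [← ENNReal.ofReal_natCast, ← ENNReal.ofReal_mul hcard.le, inv_div,
          mul_div_cancel₀ _ hcard.ne']

/-- **Proposition 1 (maximum-likelihood concentration; Theorem 21 of Agarwal et al.).**
Let `F` be a nonempty finite class of proper conditional distributions `f : X → PMF Y`
(each coordinate measurable), realizable via `f* ∈ F`, and let the `N` samples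
`(x_i, y_i)` be i.i.d. with `x_i ~ p_X` and `y_i ~ f*(x_i)` (i.e., each sample is drawn
from `p_X ⊗ₘ κ` where `κ x = f*(x)`). Then for every `δ ∈ (0, 1)`, with probability at
least `1 − δ`, every maximum-likelihood estimate `f̂ ∈ F` (every maximizer of the
likelihood `∏ᵢ f(x_i)(y_i)`, equivalently of `Σᵢ log f(x_i)(y_i)`) satisfies
`E_{x ~ p_X}[(Σ_y |f̂(x)(y) − f*(x)(y)|)²] ≤ 8 log(|F| / δ) / N`. -/
theorem mle_concentration
    {X : Type*} [MeasurableSpace X] {Y : Type*} [Fintype Y] [Nonempty Y]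
    [MeasurableSpace Y] [MeasurableSingletonClass Y]
    (pX : Measure X) [IsProbabilityMeasure pX]
    (F : Finset (X → PMF Y)) (hF : F.Nonempty)
    (hmeas : ∀ f ∈ F, ∀ y : Y, Measurable fun x => f x y)
    (fstar : X → PMF Y) (hfstar : fstar ∈ F)
    (κ : Kernel X Y) [IsMarkovKernel κ] (hκ : ∀ x : X, κ x = (fstar x).toMeasure)
    (N : ℕ) (hN : 1 ≤ N) (δ : ℝ) (hδ : δ ∈ Set.Ioo (0 : ℝ) 1) :
    ENNReal.ofReal (1 - δ) ≤
      (Measure.pi fun _ : Fin N => pX.compProd κ)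
        {d : Fin N → X × Y |
          ∀ fhat ∈ F,
            (∀ f ∈ F, ∏ i : Fin N, f (d i).1 (d i).2 ≤ ∏ i : Fin N, fhat (d i).1 (d i).2) →
            ∫ x, (∑ y : Y, |(fhat x y).toReal - (fstar x y).toReal|) ^ 2 ∂pX ≤
              8 * Real.log (F.card / δ) / N} :=
  mle_concentration_general pX F hmeas fstar hfstar κ hκ N hN δ hδ
end
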